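/- arXiv:2007.14538 — 2 statements merged into one kernel-verified Lean document; each statement's English description precedes it below -/
import Mathlib

section
/- For α ∈ (0,2), the second difference of the fGn autocovariance satisfies γ(k+n) - 2γ(k) + γ(k-n) = O(k^{α-3}) as k → ∞, for each fixed n ∈ ℕ, where γ(k) = (1/2)(|k+1|^α - 2|k|^α + |k-1|^α). Consequently, for each n, the sequence k ↦ γ(k+n) - 2γ(k) + γ(k-n) is absolutely summable and square summable. -/
/-!
For `x ≥ n + 1` the absolute values in `γ` disappear, and `γ(x+n) - 2γ(x) + γ(x-n)` is half the
iterated second difference `Δ²ₙ Δ²₁ f (x)` of `f s = s ^ α`. By the mean value theorem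
`|Δ²ₙ G| ≤ 2n sup |G'|` and `|Δ²₁ F| ≤ sup |F''|`; since differences commute with derivatives,
taking `G = Δ²₁ f`, `G' = Δ²₁ f'` and `F = f'` bounds the difference by
`n |α (α - 1) (α - 2)| (x - n - 1) ^ (α - 3) = O(x ^ (α - 3))`. As `α - 3 < -1` the sequence is
absolutely summable, and since it tends to zero its squares are eventually dominated by it.
-/

open Filter Asymptotics Set

noncomputable def secondDiff (g : ℝ → ℝ) (h x : ℝ) : ℝ := g (x + h) - 2 * g x + g (x - h)

theorem HasDerivAt.secondDiff {g g' : ℝ → ℝ} {h x : ℝ}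
    (hplus : HasDerivAt g (g' (x + h)) (x + h)) (hmid : HasDerivAt g (g' x) x)
    (hminus : HasDerivAt g (g' (x - h)) (x - h)) :
    HasDerivAt (secondDiff g h) (secondDiff g' h x) x :=
  ((hplus.comp_add_const x h).sub (hmid.const_mul 2)).add (hminus.comp_sub_const x h)

lemma abs_sub_le_of_hasDerivAt {g g' : ℝ → ℝ} {a b M : ℝ} (hab : a ≤ b)
    (hg : ∀ t ∈ Icc a b, HasDerivAt g (g' t) t) (hM : ∀ t ∈ Icc a b, |g' t| ≤ M) :
    |g b - g a| ≤ M * (b - a) :=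
  norm_image_sub_le_of_norm_deriv_le_segment' (fun t ht => (hg t ht).hasDerivWithinAt)
    (fun t ht => hM t (Ico_subset_Icc_self ht)) b (right_mem_Icc.2 hab)

lemma abs_secondDiff_le {g g' : ℝ → ℝ} {h x M : ℝ} (hh : 0 ≤ h)
    (hg : ∀ t ∈ Icc (x - h) (x + h), HasDerivAt g (g' t) t)
    (hM : ∀ t ∈ Icc (x - h) (x + h), |g' t| ≤ M) :
    |secondDiff g h x| ≤ 2 * h * M := by
  have hleft : Icc (x - h) x ⊆ Icc (x - h) (x + h) := Icc_subset_Icc le_rfl (by linarith)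
  have hright : Icc x (x + h) ⊆ Icc (x - h) (x + h) := Icc_subset_Icc (by linarith) le_rfl
  calc |secondDiff g h x| = |(g (x + h) - g x) - (g x - g (x - h))| := by
        rw [secondDiff]; ring_nf
    _ ≤ |g (x + h) - g x| + |g x - g (x - h)| := abs_sub _ _
    _ ≤ M * (x + h - x) + M * (x - (x - h)) := add_le_add
        (abs_sub_le_of_hasDerivAt (by linarith) (fun t ht => hg t (hright ht))
          (fun t ht => hM t (hright ht)))
        (abs_sub_le_of_hasDerivAt (by linarith) (fun t ht => hg t (hleft ht))
          (fun t ht => hM t (hleft ht)))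
    _ = 2 * h * M := by ring

lemma abs_secondDiff_le_sq {g g' g'' : ℝ → ℝ} {h x M : ℝ} (hh : 0 ≤ h)
    (hg : ∀ t ∈ Icc (x - h) (x + h), HasDerivAt g (g' t) t)
    (hg' : ∀ t ∈ Icc (x - h) (x + h), HasDerivAt g' (g'' t) t)
    (hM : ∀ t ∈ Icc (x - h) (x + h), |g'' t| ≤ M) :
    |secondDiff g h x| ≤ h ^ 2 * M := by
  -- `secondDiff g h x = φ x - φ (x - h)` for the forward difference `φ s = g (s + h) - g s`,
  -- whose derivative `g' (s + h) - g' s` is at most `h * M` by the mean value theorem for `g'`.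
  set φ : ℝ → ℝ := fun s => g (s + h) - g s
  have hsub : ∀ s ∈ Icc (x - h) x, Icc s (s + h) ⊆ Icc (x - h) (x + h) := fun s hs =>
    Icc_subset_Icc hs.1 (by linarith [hs.2])
  have hφ : ∀ s ∈ Icc (x - h) x, HasDerivAt φ (g' (s + h) - g' s) s := fun s hs =>
    ((hg (s + h) (hsub s hs (right_mem_Icc.2 (by linarith)))).comp_add_const s h).sub
      (hg s (hsub s hs (left_mem_Icc.2 (by linarith))))
  have hφ' : ∀ s ∈ Icc (x - h) x, |g' (s + h) - g' s| ≤ M * h := fun s hs => by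
    simpa using abs_sub_le_of_hasDerivAt (by linarith) (fun t ht => hg' t (hsub s hs ht))
      (fun t ht => hM t (hsub s hs ht))
  calc |secondDiff g h x| = |φ x - φ (x - h)| := by
        simp only [secondDiff, φ, sub_add_cancel]; ring_nf
    _ ≤ M * h * (x - (x - h)) := abs_sub_le_of_hasDerivAt (by linarith) hφ hφ'
    _ = h ^ 2 * M := by ring

lemma hasDerivAt_const_mul_rpow (c p : ℝ) {t : ℝ} (ht : 0 < t) :
    HasDerivAt (fun s => c * s ^ p) (c * p * t ^ (p - 1)) t := by
  simpa only [mul_assoc] using (Real.hasDerivAt_rpow_const (p := p) (Or.inl ht.ne')).const_mul c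

lemma abs_secondDiff_secondDiff_rpow_le {α n x : ℝ} (hα : α ≤ 3) (hn : 0 ≤ n) (hx : n + 1 < x) :
    |secondDiff (secondDiff (fun s => s ^ α) 1) n x| ≤
      2 * n * (|α * (α - 1) * (α - 2)| * (x - n - 1) ^ (α - 3)) := by
  have third_deriv_le : ∀ s, x - n - 1 ≤ s →
      |α * (α - 1) * (α - 1 - 1) * s ^ (α - 1 - 1 - 1)| ≤
        |α * (α - 1) * (α - 2)| * (x - n - 1) ^ (α - 3) := fun s hs => by
    have hs0 : 0 < s := by linarith
    rw [show α - 1 - 1 = α - 2 by ring, show α - 2 - 1 = α - 3 by ring, abs_mul,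
      abs_of_pos (Real.rpow_pos_of_pos hs0 _)]
    exact mul_le_mul_of_nonneg_left
      (Real.rpow_le_rpow_of_nonpos (by linarith) hs (by linarith)) (abs_nonneg _)
  refine abs_secondDiff_le (g' := secondDiff (fun s => α * s ^ (α - 1)) 1) hn
    (fun t ht => ?_) (fun t ht => ?_)
  · have ht1 : 1 < t := by linarith [ht.1]
    exact HasDerivAt.secondDiff (Real.hasDerivAt_rpow_const (Or.inl (by linarith)))
      (Real.hasDerivAt_rpow_const (Or.inl (by linarith)))
      (Real.hasDerivAt_rpow_const (Or.inl (by linarith)))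
  · simpa using abs_secondDiff_le_sq zero_le_one
      (fun s hs => hasDerivAt_const_mul_rpow α (α - 1) (by linarith [hs.1, ht.1]))
      (fun s hs => hasDerivAt_const_mul_rpow (α * (α - 1)) (α - 1 - 1) (by linarith [hs.1, ht.1]))
      (fun s hs => third_deriv_le s (by linarith [hs.1, ht.1]))

lemma isBigO_rpow_sub_const {p c : ℝ} (hp : p ≤ 0) (hc : 0 ≤ c) :
    (fun x => (x - c) ^ p) =O[atTop] fun x => x ^ p := by
  refine IsBigO.of_bound (2 ^ (-p)) ?_
  filter_upwards [eventually_gt_atTop (2 * c)] with x hx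
  have hx0 : 0 < x := by linarith
  rw [Real.norm_of_nonneg (Real.rpow_nonneg (by linarith) _),
    Real.norm_of_nonneg (Real.rpow_nonneg hx0.le _)]
  calc (x - c) ^ p ≤ (x / 2) ^ p := Real.rpow_le_rpow_of_nonpos (by positivity) (by linarith) hp
    _ = 2 ^ (-p) * x ^ p := by
      rw [Real.div_rpow hx0.le zero_le_two, Real.rpow_neg zero_le_two, div_eq_inv_mul]

lemma isBigO_secondDiff_secondDiff_rpow {α n : ℝ} (hα : α ≤ 3) (hn : 0 ≤ n) :
    secondDiff (secondDiff (fun s => s ^ α) 1) n =O[atTop] fun x => x ^ (α - 3) := by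
  have hbound : secondDiff (secondDiff (fun s => s ^ α) 1) n =O[atTop]
      fun x => (x - (n + 1)) ^ (α - 3) := by
    refine IsBigO.of_bound (2 * n * |α * (α - 1) * (α - 2)|) ?_
    filter_upwards [eventually_gt_atTop (n + 1)] with x hx
    rw [Real.norm_eq_abs, Real.norm_of_nonneg (Real.rpow_nonneg (by linarith) _), sub_add_eq_sub_sub,
      mul_assoc]
    exact abs_secondDiff_secondDiff_rpow_le hα hn hx
  exact hbound.trans (isBigO_rpow_sub_const (by linarith) (by linarith))

lemma summable_sq_of_summable_abs {ι : Type*} {a : ι → ℝ} (h : Summable fun i => |a i|) :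
    Summable fun i => a i ^ 2 := by
  have ha : Tendsto a cofinite (nhds 0) := by
    simpa using (tendsto_zero_iff_abs_tendsto_zero a).2 h.tendsto_cofinite_zero
  refine summable_of_isBigO h ?_
  simpa [sq] using ((ha.isBigO_one ℝ).mul (isBigO_abs_right.2 (isBigO_refl a cofinite)))

theorem stmt_8 (α : ℝ) (hα : α ∈ Set.Ioo (0 : ℝ) 2) (γ : ℝ → ℝ)
    (hγ : ∀ k : ℝ, γ k = (1 / 2) * (|k + 1| ^ α - 2 * |k| ^ α + |k - 1| ^ α)) (n : ℕ) :
    ((fun k : ℝ => γ (k + n) - 2 * γ k + γ (k - n)) =O[atTop] fun k : ℝ => k ^ (α - 3)) ∧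
    Summable (fun k : ℕ => |γ ((k : ℝ) + 1 + n) - 2 * γ ((k : ℝ) + 1) + γ ((k : ℝ) + 1 - n)|) ∧
    Summable (fun k : ℕ => (γ ((k : ℝ) + 1 + n) - 2 * γ ((k : ℝ) + 1) + γ ((k : ℝ) + 1 - n)) ^ 2) := by
  have hγ_eq : ∀ x, 1 ≤ x → γ x = 1 / 2 * secondDiff (fun s => s ^ α) 1 x := fun x hx => by
    rw [hγ, secondDiff, abs_of_nonneg (by linarith), abs_of_nonneg (by linarith),
      abs_of_nonneg (by linarith)]
  have hO : secondDiff γ n =O[atTop] fun k : ℝ => k ^ (α - 3) := by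
    have hγ_diff : (fun x => 1 / 2 * secondDiff (secondDiff (fun s => s ^ α) 1) n x)
        =ᶠ[atTop] secondDiff γ n := by
      filter_upwards [eventually_ge_atTop ((n : ℝ) + 1)] with x hx
      simp only [secondDiff]
      rw [hγ_eq x (by linarith), hγ_eq (x + n) (by linarith), hγ_eq (x - n) (by linarith)]
      simp only [secondDiff]
      ring
    exact ((isBigO_secondDiff_secondDiff_rpow (by linarith [hα.2]) n.cast_nonneg).const_mul_left
      _).congr' hγ_diff EventuallyEq.rfl
  have hO_nat := hO.comp_tendsto (tendsto_atTop_add_const_right _ 1 tendsto_natCast_atTop_atTop)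
  have hsum : Summable fun k : ℕ => ((k : ℝ) + 1) ^ (α - 3) := by
    simpa using (summable_nat_add_iff 1).2 (Real.summable_nat_rpow.2 (by linarith [hα.2]))
  have habs := summable_of_isBigO_nat hsum (isBigO_abs_left.2 hO_nat)
  exact ⟨hO, habs, summable_sq_of_summable_abs habs⟩
end

section
/- Let (X, Y) be a jointly Gaussian centered vector with unit variances and correlation ρ. Then Cov(sin X, sin Y) = e^{-1} sinh(ρ). -/
open MeasureTheory

lemma key {Ω : Type*} [MeasurableSpace Ω] (μ : Measure Ω) (f : Ω → ℝ) (c : ℝ)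
    (h : ∫ ω, Complex.exp (Complex.I * (f ω : ℂ)) ∂μ = Complex.exp ((c : ℂ))) :
    (∫ ω, Real.cos (f ω) ∂μ = Real.exp c ∧ ∫ ω, Real.sin (f ω) ∂μ = 0) ∧
    Integrable (fun ω => Real.cos (f ω)) μ ∧ Integrable (fun ω => Real.sin (f ω)) μ := by
  have hne : (∫ ω, Complex.exp (Complex.I * (f ω : ℂ)) ∂μ) ≠ 0 := by
    rw [h]; exact Complex.exp_ne_zero _
  have hInt : Integrable (fun ω => Complex.exp (Complex.I * (f ω : ℂ))) μ := by
    by_contra hc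
    exact hne (integral_undef hc)
  have hre : ∀ ω, (Complex.exp (Complex.I * (f ω : ℂ))).re = Real.cos (f ω) := by
    intro ω; rw [mul_comm, Complex.exp_ofReal_mul_I_re]
  have him : ∀ ω, (Complex.exp (Complex.I * (f ω : ℂ))).im = Real.sin (f ω) := by
    intro ω; rw [mul_comm, Complex.exp_ofReal_mul_I_im]
  have hcInt : Integrable (fun ω => Real.cos (f ω)) μ := by
    have := hInt.re
    simpa [hre, Complex.re] using this
  have hsInt : Integrable (fun ω => Real.sin (f ω)) μ := by
    have := hInt.im
    simpa [him] using this
  refine ⟨⟨?_, ?_⟩, hcInt, hsInt⟩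
  · have := integral_re hInt
    rw [h] at this
    simp only [RCLike.re_eq_complex_re, hre] at this
    rw [this]
    simp [Complex.exp_ofReal_re]
  · have := integral_im hInt
    rw [h] at this
    simp only [RCLike.im_eq_complex_im, him] at this
    rw [this]
    simp [Complex.exp_ofReal_im]

/-- For a jointly Gaussian centered pair with unit variances and correlation `ρ`,
`Cov(sin X, sin Y) = e⁻¹ sinh ρ`. -/
theorem stmt_12 {Ω : Type*} [MeasurableSpace Ω] (μ : Measure Ω) [IsProbabilityMeasure μ]
    (X Y : Ω → ℝ) (ρ : ℝ)
    (hchar : ∀ a b : ℝ,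
      ∫ ω, Complex.exp (Complex.I * ((a * X ω + b * Y ω : ℝ) : ℂ)) ∂μ
        = Complex.exp (-(((a ^ 2 + 2 * a * b * ρ + b ^ 2) / 2 : ℝ) : ℂ))) :
    (∫ ω, Real.sin (X ω) * Real.sin (Y ω) ∂μ)
        - (∫ ω, Real.sin (X ω) ∂μ) * (∫ ω, Real.sin (Y ω) ∂μ)
      = Real.exp (-1) * Real.sinh ρ := by
  have hX := key μ X (-(1/2)) (by
    have h := hchar 1 0
    norm_num at h
    convert h using 2 <;> (push_cast; try ring))
  have hY := key μ Y (-(1/2)) (by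
    have h := hchar 0 1
    norm_num at h
    convert h using 2 <;> (push_cast; try ring))
  have hsub := key μ (fun ω => X ω - Y ω) (ρ - 1) (by
    have h := hchar 1 (-1)
    norm_num [sub_eq_add_neg] at h ⊢
    convert h using 2 <;> (push_cast; try ring))
  have hadd := key μ (fun ω => X ω + Y ω) (-ρ - 1) (by
    have h := hchar 1 1
    norm_num at h
    convert h using 2 <;> (push_cast; try ring))
  have hprod : (∫ ω, Real.sin (X ω) * Real.sin (Y ω) ∂μ)
      = (Real.exp (ρ - 1) - Real.exp (-ρ - 1)) / 2 := by
    have heq : ∀ ω, Real.sin (X ω) * Real.sin (Y ω)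
        = (Real.cos (X ω - Y ω) - Real.cos (X ω + Y ω)) / 2 := by
      intro ω
      rw [Real.cos_sub, Real.cos_add]; ring
    simp_rw [heq]
    rw [integral_div, integral_sub hsub.2.1 hadd.2.1, hsub.1.1, hadd.1.1]
  rw [hprod, hX.1.2, hY.1.2, Real.sinh_eq]
  have e1 : Real.exp (ρ - 1) = Real.exp (-1) * Real.exp ρ := by
    rw [← Real.exp_add]; ring_nf
  have e2 : Real.exp (-ρ - 1) = Real.exp (-1) * Real.exp (-ρ) := by
    rw [← Real.exp_add]; ring_nf
  rw [e1, e2]; ring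
end
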